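/- There exists a positive constant C₀, independent of k, such that for every k ∈ ℤ₊: ‖v_k‖_{L^∞(ℝ)} ≤ C₀ E_k^{3/2 + 1/(4n+4)} and ‖w_k‖_{L^∞(ℝ)} ≤ C₀ Ẽ_k^{3/2 + 1/(4n+4)}, where E_k = 4k(n+1)+2n+1 and Ẽ_k = 4k(n+1)+2n+3. -/

import Mathlib

open MeasureTheory

/-- Generalized binomial coefficient `binom(a, j) = a (a-1) ⋯ (a-j+1) / j!`. -/
noncomputable def genBinom (a : ℝ) (j : ℕ) : ℝ :=
  (∏ i ∈ Finset.range j, (a - i)) / (Nat.factorial j : ℝ)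

/-- Generalized Laguerre polynomial
`L_k^{(a)}(s) = Σ_{i=0}^{k} (-1)^i binom(k+a, k-i) s^i / i!`. -/
noncomputable def laguerre (a : ℝ) (k : ℕ) (s : ℝ) : ℝ :=
  ∑ i ∈ Finset.range (k + 1),
    (-1 : ℝ) ^ i * genBinom ((k : ℝ) + a) (k - i) * s ^ i / (Nat.factorial i : ℝ)

/-- The (unnormalized) even-parity eigenfunction
`v_k(t) = e^{-t^{2n+2}/(2n+2)} L_k^{(-1/(2n+2))}(t^{2n+2}/(n+1))`. -/
noncomputable def vk (n k : ℕ) (t : ℝ) : ℝ :=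
  Real.exp (-(t ^ (2 * n + 2)) / (2 * (n : ℝ) + 2)) *
    laguerre (-(1 / (2 * (n : ℝ) + 2))) k (t ^ (2 * n + 2) / ((n : ℝ) + 1))

/-- The (unnormalized) odd-parity eigenfunction
`w_k(t) = e^{-t^{2n+2}/(2n+2)} t L_k^{(1/(2n+2))}(t^{2n+2}/(n+1))`. -/
noncomputable def wk (n k : ℕ) (t : ℝ) : ℝ :=
  Real.exp (-(t ^ (2 * n + 2)) / (2 * (n : ℝ) + 2)) * t *
    laguerre (1 / (2 * (n : ℝ) + 2)) k (t ^ (2 * n + 2) / ((n : ℝ) + 1))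

/-- `v_k` normalized so that `∫_ℝ t^{2n} v_k(t)² dt = 1`. -/
noncomputable def nvk (n k : ℕ) (t : ℝ) : ℝ :=
  vk n k t / Real.sqrt (∫ s : ℝ, s ^ (2 * n) * (vk n k s) ^ 2)

/-- `w_k` normalized so that `∫_ℝ t^{2n} w_k(t)² dt = 1`. -/
noncomputable def nwk (n k : ℕ) (t : ℝ) : ℝ :=
  wk n k t / Real.sqrt (∫ s : ℝ, s ^ (2 * n) * (wk n k s) ^ 2)

open Filter Set
section
variable (a : ℝ) (k : ℕ)

noncomputable def lagD (a : ℝ) (k : ℕ) (s : ℝ) : ℝ :=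
  ∑ i ∈ Finset.range (k + 1),
    (-1 : ℝ) ^ i * genBinom ((k : ℝ) + a) (k - i) * ((i : ℝ) * s ^ (i - 1)) / (Nat.factorial i : ℝ)
noncomputable def lagDD (a : ℝ) (k : ℕ) (s : ℝ) : ℝ :=
  ∑ i ∈ Finset.range (k + 1),
    (-1 : ℝ) ^ i * genBinom ((k : ℝ) + a) (k - i) *
      ((i : ℝ) * (((i - 1 : ℕ) : ℝ) * s ^ (i - 1 - 1))) / (Nat.factorial i : ℝ)
lemma hasDerivAt_laguerre (a : ℝ) (k : ℕ) (s : ℝ) :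
    HasDerivAt (fun s => laguerre a k s) (lagD a k s) s := by
  unfold laguerre lagD
  apply HasDerivAt.fun_sum
  intro i _
  exact ((hasDerivAt_pow i s).const_mul _).div_const _

lemma hasDerivAt_lagD (a : ℝ) (k : ℕ) (s : ℝ) :
    HasDerivAt (fun s => lagD a k s) (lagDD a k s) s := by
  unfold lagD lagDD
  apply HasDerivAt.fun_sum
  intro i _
  exact (((hasDerivAt_pow (i - 1) s).const_mul _).const_mul _).div_const _

lemma genBinom_succ_mul (b : ℝ) (m : ℕ) :
    genBinom b (m + 1) * ((m : ℝ) + 1) = genBinom b m * (b - m) := by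
  unfold genBinom
  rw [Finset.prod_range_succ, Nat.factorial_succ]
  have h1 : ((m.factorial : ℝ)) ≠ 0 := Nat.cast_ne_zero.2 m.factorial_ne_zero
  have h2 : ((m : ℝ) + 1) ≠ 0 := by positivity
  push_cast
  field_simp

lemma lag_rec {j : ℕ} (hj : j < k) :
    (-1 : ℝ) ^ (j+1) * genBinom ((k : ℝ) + a) (k - (j+1)) * (((j:ℝ)+1) * ((j:ℝ) + a + 1))
      / (Nat.factorial (j+1) : ℝ)
    + (-1 : ℝ) ^ j * genBinom ((k : ℝ) + a) (k - j) * ((k:ℝ) - (j:ℝ))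
      / (Nat.factorial j : ℝ) = 0 := by
  have hstep := genBinom_succ_mul ((k : ℝ) + a) (k - (j+1))
  have hm1 : k - (j+1) + 1 = k - j := by omega
  have hc : ((k - (j+1) : ℕ) : ℝ) = (k : ℝ) - (j : ℝ) - 1 := by
    have : (j + 1 : ℕ) ≤ k := hj
    push_cast [Nat.cast_sub this]
    ring
  rw [hm1, hc] at hstep
  -- hstep : genBinom b (k-j) * ((k-j-1)+1) = genBinom b (k-(j+1)) * ((k+a) - (k-j-1))
  have hstep' : genBinom ((k : ℝ) + a) (k - j) * ((k:ℝ) - (j:ℝ)) =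
      genBinom ((k : ℝ) + a) (k - (j+1)) * ((j:ℝ) + a + 1) := by
    rw [show (k:ℝ) - (j:ℝ) = ((k:ℝ) - (j:ℝ) - 1) + 1 by ring, hstep]; ring
  rw [Nat.factorial_succ]
  have h1 : ((j.factorial : ℝ)) ≠ 0 := Nat.cast_ne_zero.2 j.factorial_ne_zero
  have h2 : ((j : ℝ) + 1) ≠ 0 := by positivity
  push_cast
  field_simp
  linear_combination ((-1:ℝ)^j) * hstep'
end

section
variable (a : ℝ) (k : ℕ)

lemma lagD_shift (s : ℝ) : lagD a k s =
    ∑ j ∈ Finset.range k, (-1:ℝ)^(j+1) * genBinom ((k:ℝ)+a) (k-(j+1)) *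
      (((j:ℝ)+1) * s^j) / (Nat.factorial (j+1) : ℝ) := by
  unfold lagD
  rw [Finset.sum_range_succ']
  simp only [Nat.cast_zero, zero_mul, mul_zero, zero_div, add_zero]
  refine Finset.sum_congr rfl fun j _ => ?_
  simp only [Nat.succ_sub_one]
  push_cast
  ring

lemma lagDD_shift (s : ℝ) : lagDD a k s =
    ∑ j ∈ Finset.range k, (-1:ℝ)^(j+1) * genBinom ((k:ℝ)+a) (k-(j+1)) *
      (((j:ℝ)+1) * ((j:ℝ) * s^(j-1))) / (Nat.factorial (j+1) : ℝ) := by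
  unfold lagDD
  rw [Finset.sum_range_succ']
  simp only [Nat.cast_zero, zero_mul, mul_zero, zero_div, add_zero]
  refine Finset.sum_congr rfl fun j _ => ?_
  simp only [Nat.succ_sub_one]
  push_cast
  ring

lemma lag_ode (s : ℝ) :
    s * lagDD a k s + (a + 1 - s) * lagD a k s + (k : ℝ) * laguerre a k s = 0 := by
  have h1 : s * lagDD a k s + (a+1) * lagD a k s
      = ∑ j ∈ Finset.range k, ((-1:ℝ)^(j+1) * genBinom ((k:ℝ)+a) (k-(j+1)) *
          (((j:ℝ)+1) * ((j:ℝ)+a+1)) / (Nat.factorial (j+1) : ℝ)) * s^j := by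
    rw [lagD_shift, lagDD_shift, Finset.mul_sum, Finset.mul_sum, ← Finset.sum_add_distrib]
    refine Finset.sum_congr rfl fun j _ => ?_
    rcases Nat.eq_zero_or_pos j with h|h
    · subst h; simp; ring
    · have hs : s^j = s^(j-1) * s := by rw [← pow_succ, Nat.sub_add_cancel h]
      rw [hs]; ring
  have h2 : (-s) * lagD a k s + (k:ℝ) * laguerre a k s
      = ∑ j ∈ Finset.range k, ((-1:ℝ)^j * genBinom ((k:ℝ)+a) (k-j) *
          ((k:ℝ)-(j:ℝ)) / (Nat.factorial j : ℝ)) * s^j := by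
    unfold lagD laguerre
    rw [Finset.mul_sum, Finset.mul_sum, ← Finset.sum_add_distrib, Finset.sum_range_succ]
    have htop : -s * ((-1:ℝ)^k * genBinom ((k:ℝ)+a) (k-k) * ((k:ℝ) * s^(k-1)) / (Nat.factorial k : ℝ))
        + (k:ℝ) * ((-1:ℝ)^k * genBinom ((k:ℝ)+a) (k-k) * s^k / (Nat.factorial k : ℝ)) = 0 := by
      rcases Nat.eq_zero_or_pos k with h|h
      · subst h; simp
      · have hs : s^k = s^(k-1) * s := by rw [← pow_succ, Nat.sub_add_cancel h]
        rw [hs]; ring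
    rw [htop, add_zero]
    refine Finset.sum_congr rfl fun j _ => ?_
    rcases Nat.eq_zero_or_pos j with h|h
    · subst h; simp; ring
    · have hs : s^j = s^(j-1) * s := by rw [← pow_succ, Nat.sub_add_cancel h]
      rw [hs]; ring
  have hsplit : s * lagDD a k s + (a + 1 - s) * lagD a k s + (k : ℝ) * laguerre a k s
      = (s * lagDD a k s + (a+1) * lagD a k s) + ((-s) * lagD a k s + (k:ℝ) * laguerre a k s) := by
    ring
  rw [hsplit, h1, h2, ← Finset.sum_add_distrib]
  apply Finset.sum_eq_zero
  intro j hj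
  have hrec := lag_rec a k (Finset.mem_range.1 hj)
  linear_combination (s^j) * hrec
end

noncomputable def ep (n : ℕ) (t : ℝ) : ℝ := Real.exp (-(t ^ (2 * n + 2)) / (2 * (n : ℝ) + 2))

noncomputable def Dop (n : ℕ) (Q : Polynomial ℝ) : Polynomial ℝ :=
  Polynomial.derivative Q - Polynomial.X ^ (2 * n + 1) * Q

noncomputable def laguerrePoly (n : ℕ) (a : ℝ) (k : ℕ) : Polynomial ℝ :=
  ∑ i ∈ Finset.range (k + 1),
    Polynomial.C ((-1:ℝ)^i * genBinom ((k:ℝ)+a) (k-i) / (Nat.factorial i : ℝ) / ((n:ℝ)+1)^i) *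
      Polynomial.X ^ ((2*n+2) * i)

lemma laguerrePoly_eval (n : ℕ) (a : ℝ) (k : ℕ) (t : ℝ) :
    (laguerrePoly n a k).eval t = laguerre a k (t^(2*n+2) / ((n:ℝ)+1)) := by
  unfold laguerrePoly laguerre
  rw [Polynomial.eval_finset_sum]
  refine Finset.sum_congr rfl fun i _ => ?_
  simp only [Polynomial.eval_mul, Polynomial.eval_C, Polynomial.eval_pow, Polynomial.eval_X]
  rw [div_pow, pow_mul]
  ring

lemma hasDerivAt_u (n : ℕ) (t : ℝ) :
    HasDerivAt (fun t : ℝ => t^(2*n+2) / ((n:ℝ)+1)) (2 * t^(2*n+1)) t := by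
  have h := (hasDerivAt_pow (2*n+2) t).div_const ((n:ℝ)+1)
  have e : 2*n+2-1 = 2*n+1 := by omega
  rw [e] at h
  refine h.congr_deriv ?_
  have hne : ((n:ℝ)+1) ≠ 0 := by positivity
  field_simp
  push_cast
  ring

lemma hasDerivAt_lag_comp (n : ℕ) (a : ℝ) (k : ℕ) (t : ℝ) :
    HasDerivAt (fun t : ℝ => laguerre a k (t^(2*n+2)/((n:ℝ)+1)))
      (lagD a k (t^(2*n+2)/((n:ℝ)+1)) * (2*t^(2*n+1))) t :=
  (hasDerivAt_laguerre a k _).comp t (hasDerivAt_u n t)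

lemma derivative_laguerrePoly_eval (n : ℕ) (a : ℝ) (k : ℕ) (t : ℝ) :
    (Polynomial.derivative (laguerrePoly n a k)).eval t
      = lagD a k (t^(2*n+2)/((n:ℝ)+1)) * (2*t^(2*n+1)) := by
  have h1 := (laguerrePoly n a k).hasDerivAt t
  have hfun : (fun t : ℝ => (laguerrePoly n a k).eval t)
      = fun t : ℝ => laguerre a k (t^(2*n+2)/((n:ℝ)+1)) := funext (laguerrePoly_eval n a k)
  rw [hfun] at h1
  exact h1.unique (hasDerivAt_lag_comp n a k t)

lemma derivative2_laguerrePoly_eval (n : ℕ) (a : ℝ) (k : ℕ) (t : ℝ) :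
    (Polynomial.derivative (Polynomial.derivative (laguerrePoly n a k))).eval t
      = (lagDD a k (t^(2*n+2)/((n:ℝ)+1)) * (2*t^(2*n+1))) * (2*t^(2*n+1))
        + lagD a k (t^(2*n+2)/((n:ℝ)+1)) * (2*(((2*n+1 : ℕ) : ℝ) * t^(2*n))) := by
  have h1 := (Polynomial.derivative (laguerrePoly n a k)).hasDerivAt t
  have hfun : (fun t : ℝ => (Polynomial.derivative (laguerrePoly n a k)).eval t)
      = fun t : ℝ => lagD a k (t^(2*n+2)/((n:ℝ)+1)) * (2*t^(2*n+1)) :=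
    funext (derivative_laguerrePoly_eval n a k)
  rw [hfun] at h1
  have hp : HasDerivAt (fun t : ℝ => (2:ℝ)*t^(2*n+1)) (2*(((2*n+1 : ℕ) : ℝ) * t^(2*n))) t := by
    have h := (hasDerivAt_pow (2*n+1) t).const_mul (2:ℝ)
    have e : 2*n+1-1 = 2*n := by omega
    rwa [e] at h
  have h2 := ((hasDerivAt_lagD a k _).comp t (hasDerivAt_u n t)).mul hp
  exact h1.unique h2

lemma Dop_eval (n : ℕ) (R : Polynomial ℝ) (t : ℝ) :
    (Dop n R).eval t = (Polynomial.derivative R).eval t - t^(2*n+1) * R.eval t := by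
  simp [Dop]

lemma DopDop_eval (n : ℕ) (R : Polynomial ℝ) (t : ℝ) :
    (Dop n (Dop n R)).eval t
      = (Polynomial.derivative (Polynomial.derivative R)).eval t
        - ((2*n+1 : ℕ) : ℝ) * t^(2*n) * R.eval t
        - 2 * t^(2*n+1) * (Polynomial.derivative R).eval t
        + t^(4*n+2) * R.eval t := by
  rw [Dop_eval]
  unfold Dop
  simp only [Polynomial.derivative_sub, Polynomial.derivative_mul, Polynomial.derivative_X_pow,
    Polynomial.eval_sub, Polynomial.eval_add, Polynomial.eval_mul, Polynomial.eval_pow,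
    Polynomial.eval_X, Polynomial.eval_natCast, Polynomial.eval_C]
  have e : 2*n+1-1 = 2*n := by omega
  rw [e]
  push_cast
  have e2 : t^(2*n+1) * t^(2*n+1) = t^(4*n+2) := by
    rw [← pow_add]
    congr 1
    omega
  linear_combination (Polynomial.eval t R) * e2

lemma heig_v (n k : ℕ) (t : ℝ) :
    -((Dop n (Dop n (laguerrePoly n (-(1 / (2 * (n : ℝ) + 2))) k))).eval t)
        + t^(4*n+2) * (laguerrePoly n (-(1 / (2 * (n : ℝ) + 2))) k).eval t
      = (4*(k:ℝ)*((n:ℝ)+1) + 2*(n:ℝ)+1) * t^(2*n)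
          * (laguerrePoly n (-(1 / (2 * (n : ℝ) + 2))) k).eval t := by
  have hne : (2 * (n:ℝ) + 2) ≠ 0 := by positivity
  have hne' : ((n:ℝ) + 1) ≠ 0 := by positivity
  rw [DopDop_eval, derivative2_laguerrePoly_eval, derivative_laguerrePoly_eval,
    laguerrePoly_eval]
  set a := -(1 / (2 * (n : ℝ) + 2)) with ha_def
  set s := t^(2*n+2)/((n:ℝ)+1) with hs_def
  have hode := lag_ode a k s
  have hs : ((n:ℝ)+1) * s = t^(2*n+2) := by rw [hs_def]; field_simp
  have ha : (2*(n:ℝ)+2) * a = -1 := by rw [ha_def]; field_simp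
  push_cast
  linear_combination (-(4*((n:ℝ)+1)*t^(2*n))) * hode
    + (4*t^(2*n)*(lagDD a k s) - 4*t^(2*n)*(lagD a k s)) * hs
    + (2*t^(2*n)*(lagD a k s)) * ha

lemma heig_w (n k : ℕ) (t : ℝ) :
    -((Dop n (Dop n (Polynomial.X * laguerrePoly n (1 / (2 * (n : ℝ) + 2)) k))).eval t)
        + t^(4*n+2) * (Polynomial.X * laguerrePoly n (1 / (2 * (n : ℝ) + 2)) k).eval t
      = (4*(k:ℝ)*((n:ℝ)+1) + 2*(n:ℝ)+3) * t^(2*n)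
          * (Polynomial.X * laguerrePoly n (1 / (2 * (n : ℝ) + 2)) k).eval t := by
  have hne : (2 * (n:ℝ) + 2) ≠ 0 := by positivity
  have hne' : ((n:ℝ) + 1) ≠ 0 := by positivity
  rw [DopDop_eval]
  simp only [Polynomial.derivative_mul, Polynomial.derivative_X, one_mul,
    Polynomial.derivative_add, Polynomial.eval_add, Polynomial.eval_mul, Polynomial.eval_X]
  rw [derivative2_laguerrePoly_eval, derivative_laguerrePoly_eval, laguerrePoly_eval]
  set a := 1 / (2 * (n : ℝ) + 2) with ha_def
  set s := t^(2*n+2)/((n:ℝ)+1) with hs_def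
  have hode := lag_ode a k s
  have hs : ((n:ℝ)+1) * s = t^(2*n+2) := by rw [hs_def]; field_simp
  have ha : (2*(n:ℝ)+2) * a = 1 := by rw [ha_def]; field_simp
  push_cast
  linear_combination (-(4*((n:ℝ)+1)*t^(2*n+1))) * hode
    + (4*t^(2*n+1)*(lagDD a k s) - 4*t^(2*n+1)*(lagD a k s)) * hs
    + (2*t^(2*n+1)*(lagD a k s)) * ha


lemma ep_pos (n : ℕ) (t : ℝ) : 0 < ep n t := Real.exp_pos _

lemma sq_le_pow_succ (n : ℕ) (t : ℝ) : t^2 ≤ t^(2*n+2) + 1 := by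
  have h0 : (0:ℝ) ≤ t^(2*n+2) := by
    have : t^(2*n+2) = (t^2)^(n+1) := by rw [← pow_mul]; ring_nf
    rw [this]; positivity
  rcases le_or_gt (t^2) 1 with h|h
  · linarith
  · have h1 : (t^2)^1 ≤ (t^2)^(n+1) := pow_le_pow_right₀ h.le (by omega)
    have e : t^(2*n+2) = (t^2)^(n+1) := by rw [← pow_mul]; ring_nf
    rw [e]; simp at h1; linarith

lemma ep_le_one (n : ℕ) (t : ℝ) : ep n t ≤ 1 := by
  rw [ep, Real.exp_le_one_iff]
  have h0 : (0:ℝ) ≤ t^(2*n+2) := by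
    have e : t^(2*n+2) = (t^2)^(n+1) := by rw [← pow_mul]; ring_nf
    rw [e]; positivity
  have : (0:ℝ) < 2*(n:ℝ)+2 := by positivity
  exact div_nonpos_of_nonpos_of_nonneg (by linarith) this.le

lemma ep_le (n : ℕ) (t : ℝ) :
    ep n t ≤ Real.exp ((1 - t^2) * (1/(2*(n:ℝ)+2))) := by
  rw [ep, Real.exp_le_exp]
  have h2 : (0:ℝ) < 2*(n:ℝ)+2 := by positivity
  rw [div_eq_mul_inv, ← one_div]
  have h3 := sq_le_pow_succ n t
  have : -(t^(2*n+2)) ≤ 1 - t^2 := by linarith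
  exact mul_le_mul_of_nonneg_right this (by positivity)

lemma poly_bound (R : Polynomial ℝ) :
    ∃ C : ℝ, 0 ≤ C ∧ ∀ t : ℝ, |R.eval t| ≤ C * Real.exp |t| := by
  refine ⟨∑ i ∈ Finset.range (R.natDegree + 1), |R.coeff i| * (Nat.factorial i : ℝ),
    Finset.sum_nonneg fun i _ => by positivity, fun t => ?_⟩
  rw [Polynomial.eval_eq_sum_range, Finset.sum_mul]
  refine (Finset.abs_sum_le_sum_abs _ _).trans (Finset.sum_le_sum fun i _ => ?_)
  rw [abs_mul, abs_pow]
  have hpow : |t|^i ≤ (Nat.factorial i : ℝ) * Real.exp |t| := by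
    have hs := Real.sum_le_exp_of_nonneg (abs_nonneg t) (i+1)
    have hterm : |t|^i / (Nat.factorial i : ℝ) ≤ ∑ j ∈ Finset.range (i+1), |t|^j / (Nat.factorial j : ℝ) := by
      apply Finset.single_le_sum (f := fun j => |t|^j / (Nat.factorial j : ℝ))
        (fun j _ => by positivity) (Finset.self_mem_range_succ i)
    have hfac : (0:ℝ) < (Nat.factorial i : ℝ) := by exact_mod_cast i.factorial_pos
    calc |t|^i = |t|^i / (Nat.factorial i : ℝ) * (Nat.factorial i : ℝ) := by field_simp
    _ ≤ Real.exp |t| * (Nat.factorial i : ℝ) := by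
        apply mul_le_mul_of_nonneg_right (hterm.trans hs) hfac.le
    _ = (Nat.factorial i : ℝ) * Real.exp |t| := by ring
  calc |R.coeff i| * |t|^i ≤ |R.coeff i| * ((Nat.factorial i : ℝ) * Real.exp |t|) :=
        mul_le_mul_of_nonneg_left hpow (abs_nonneg _)
  _ = |R.coeff i| * (Nat.factorial i : ℝ) * Real.exp |t| := by ring

lemma continuous_ep (n : ℕ) : Continuous (ep n) := by
  unfold ep
  fun_prop

lemma ep_poly_bound (n : ℕ) (R : Polynomial ℝ) :
    ∃ C : ℝ, 0 ≤ C ∧ ∀ t : ℝ,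
      |ep n t * R.eval t| ≤ C * Real.exp (-(1/(4*(n:ℝ)+4)) * t^2) := by
  obtain ⟨C₁, hC₁, hR⟩ := poly_bound R
  set c : ℝ := 1/(2*(n:ℝ)+2) with hc_def
  have hc : 0 < c := by positivity
  refine ⟨C₁ * Real.exp (c + 1/(2*c)), by positivity, fun t => ?_⟩
  have habs : |t| ≤ (c/2)*t^2 + 1/(2*c) := by
    rw [← sub_nonneg]
    have key : (c/2)*t^2 + 1/(2*c) - |t| = (c*|t| - 1)^2 / (2*c) := by
      field_simp
      linear_combination (-c^2) * sq_abs t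
    rw [key]; positivity
  have hb : |ep n t * R.eval t| ≤ Real.exp ((1 - t^2) * c) * (C₁ * Real.exp |t|) := by
    rw [abs_mul, abs_of_pos (ep_pos n t)]
    exact mul_le_mul (ep_le n t) (hR t) (abs_nonneg _) (Real.exp_pos _).le
  refine hb.trans ?_
  have hc2 : 1/(4*(n:ℝ)+4) = c/2 := by rw [hc_def]; field_simp; ring
  rw [hc2]
  calc Real.exp ((1 - t^2) * c) * (C₁ * Real.exp |t|)
      = C₁ * (Real.exp ((1 - t^2) * c) * Real.exp |t|) := by ring
  _ = C₁ * Real.exp ((1 - t^2) * c + |t|) := by rw [Real.exp_add]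
  _ ≤ C₁ * Real.exp (c + 1/(2*c) + -(c/2) * t^2) := by
      apply mul_le_mul_of_nonneg_left _ hC₁
      rw [Real.exp_le_exp]
      nlinarith [habs]
  _ = C₁ * Real.exp (c + 1/(2*c)) * Real.exp (-(c/2) * t^2) := by
      rw [Real.exp_add]; ring


lemma integrable_ep2_poly (n : ℕ) (R : Polynomial ℝ) :
    Integrable (fun t : ℝ => (ep n t)^2 * R.eval t) := by
  obtain ⟨C, hC, hb⟩ := ep_poly_bound n R
  have hbpos : (0:ℝ) < 1/(4*(n:ℝ)+4) := by positivity
  apply Integrable.mono' ((integrable_exp_neg_mul_sq hbpos).const_mul C)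
  · exact (((continuous_ep n).pow 2).mul R.continuous).aestronglyMeasurable
  · filter_upwards with t
    rw [Real.norm_eq_abs]
    calc |(ep n t)^2 * R.eval t| = ep n t * |ep n t * R.eval t| := by
          rw [abs_mul, abs_mul, abs_pow, abs_of_pos (ep_pos n t)]; ring
    _ ≤ 1 * (C * Real.exp (-(1/(4*(n:ℝ)+4)) * t^2)) := by
        apply mul_le_mul (ep_le_one n t) (hb t) (abs_nonneg _) zero_le_one
    _ = C * Real.exp (-(1/(4*(n:ℝ)+4)) * t^2) := one_mul _

lemma tendsto_ep_poly_atTop (n : ℕ) (R : Polynomial ℝ) :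
    Tendsto (fun t : ℝ => ep n t * R.eval t) atTop (nhds 0) := by
  obtain ⟨C, hC, hb⟩ := ep_poly_bound n R
  apply squeeze_zero_norm (fun t => (hb t))
  have h1 : Tendsto (fun t : ℝ => -(1/(4*(n:ℝ)+4)) * t^2) atTop atBot := by
    rw [tendsto_const_mul_atBot_of_neg (neg_lt_zero.mpr (by positivity))]
    exact tendsto_pow_atTop two_ne_zero
  have h2 := Real.tendsto_exp_atBot.comp h1
  have := h2.const_mul C
  simpa using this

lemma tendsto_ep_poly_atBot (n : ℕ) (R : Polynomial ℝ) :
    Tendsto (fun t : ℝ => ep n t * R.eval t) atBot (nhds 0) := by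
  obtain ⟨C, hC, hb⟩ := ep_poly_bound n R
  apply squeeze_zero_norm (fun t => (hb t))
  have h1 : Tendsto (fun t : ℝ => -(1/(4*(n:ℝ)+4)) * t^2) atBot atBot := by
    rw [tendsto_const_mul_atBot_of_neg (neg_lt_zero.mpr (by positivity))]
    have habs : Tendsto (fun t : ℝ => |t|^2) atBot atTop :=
      (tendsto_pow_atTop two_ne_zero).comp tendsto_abs_atBot_atTop
    refine habs.congr fun t => by rw [sq_abs]
  have h2 := Real.tendsto_exp_atBot.comp h1
  have := h2.const_mul C
  simpa using this


lemma abs_two_mul_le (x y : ℝ) : |2 * x * y| ≤ x^2 + y^2 := by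
  rw [abs_le]; constructor <;> nlinarith [sq_nonneg (x-y), sq_nonneg (x+y)]

lemma abs_two_mul_le' (x y : ℝ) : |2 * x * y| ≤ x^2/4 + 4*y^2 := by
  rw [abs_le]; constructor <;> nlinarith [sq_nonneg (x/2 - 2*y), sq_nonneg (x/2 + 2*y)]

lemma sobolev (n : ℕ) (E : ℝ) (F F' F'' : ℝ → ℝ)
    (hE : 1 ≤ E)
    (hF : ∀ t, HasDerivAt F (F' t) t)
    (hF' : ∀ t, HasDerivAt F' (F'' t) t)
    (iA : Integrable (fun s : ℝ => s^(2*n)*(F s)^2))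
    (iT : Integrable (fun s : ℝ => s^(4*n+2)*(F s)^2))
    (iF2 : Integrable (fun s : ℝ => (F s)^2))
    (iF'2 : Integrable (fun s : ℝ => (F' s)^2))
    (iFF'' : Integrable (fun s : ℝ => F s * F'' s))
    (iFF' : Integrable (fun s : ℝ => 2 * F s * F' s))
    (htopF : Tendsto F atTop (nhds 0)) (hbotF : Tendsto F atBot (nhds 0))
    (htopFF' : Tendsto (fun t => F t * F' t) atTop (nhds 0))
    (hbotFF' : Tendsto (fun t => F t * F' t) atBot (nhds 0))
    (heig : ∀ t : ℝ, F t * F'' t = t^(4*n+2)*(F t)^2 - E * t^(2*n)*(F t)^2) :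
    ∀ t : ℝ, (F t)^2 ≤ 16 * (E * (∫ s : ℝ, s^(2*n)*(F s)^2)) := by
  set A : ℝ := ∫ s : ℝ, s^(2*n)*(F s)^2 with hA_def
  set B : ℝ := ∫ s : ℝ, (F' s)^2 with hB_def
  have hA_nonneg : 0 ≤ A := integral_nonneg fun s => by
    have h2n : (0:ℝ) ≤ s^(2*n) := Even.pow_nonneg ⟨n, by ring⟩ s
    positivity
  have hB_nonneg : 0 ≤ B := integral_nonneg fun s => sq_nonneg _
  have hEA_nonneg : 0 ≤ E * A := mul_nonneg (by linarith) hA_nonneg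
  -- derivative facts
  have hFF'_deriv : ∀ x : ℝ, HasDerivAt (fun t => F t * F' t) (F' x * F' x + F x * F'' x) x :=
    fun x => (hF x).mul (hF' x)
  have hsq_deriv : ∀ x : ℝ, HasDerivAt (fun t => (F t)^2) (2 * F x * F' x) x := by
    intro x
    have h := (hF x).mul (hF x)
    simp only [pow_two]
    refine h.congr_deriv ?_
    ring
  -- energy identity
  have isum : Integrable (fun s : ℝ => F' s * F' s + F s * F'' s) := by
    have h := (iF'2.add iFF'')
    refine h.congr ?_
    filter_upwards with s
    simp [pow_two]
  have htot : ∫ s : ℝ, (F' s * F' s + F s * F'' s) = 0 := by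
    have hIoi : ∫ s in Ioi (0:ℝ), (F' s * F' s + F s * F'' s) = 0 - F 0 * F' 0 :=
      integral_Ioi_of_hasDerivAt_of_tendsto' (fun x _ => hFF'_deriv x)
        isum.integrableOn htopFF'
    have hIic : ∫ s in Iic (0:ℝ), (F' s * F' s + F s * F'' s) = F 0 * F' 0 - 0 :=
      integral_Iic_of_hasDerivAt_of_tendsto' (fun x _ => hFF'_deriv x)
        isum.integrableOn hbotFF'
    rw [← intervalIntegral.integral_Iic_add_Ioi isum.integrableOn isum.integrableOn, hIoi, hIic]
    ring
  have hB_le : B ≤ E * A := by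
    have hadd : ∫ s : ℝ, (F' s * F' s + F s * F'' s)
        = (∫ s : ℝ, F' s * F' s) + ∫ s : ℝ, F s * F'' s := by
      apply integral_add _ iFF''
      refine iF'2.congr ?_
      filter_upwards with s; rw [sq]
    have hFsq : (∫ s : ℝ, F' s * F' s) = B := by
      rw [hB_def]; congr 1; funext s; rw [sq]
    have hsub : ∫ s : ℝ, F s * F'' s
        = (∫ s : ℝ, s^(4*n+2)*(F s)^2) - E * A := by
      have hcongr : (fun s : ℝ => F s * F'' s)
          = fun s : ℝ => s^(4*n+2)*(F s)^2 - E * (s^(2*n)*(F s)^2) := by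
        funext s; rw [heig s]; ring
      rw [hcongr, integral_sub iT (iA.const_mul E), integral_const_mul, hA_def]
    have hT_nonneg : 0 ≤ ∫ s : ℝ, s^(4*n+2)*(F s)^2 := integral_nonneg fun s => by
      have h4n : (0:ℝ) ≤ s^(4*n+2) := Even.pow_nonneg ⟨2*n+1, by ring⟩ s
      positivity
    rw [hadd, hFsq] at htot
    linarith [hsub ▸ htot]
  -- decay of F²
  have hF2top : Tendsto (fun t => (F t)^2) atTop (nhds 0) := by
    have h := htopF.mul htopF
    rw [mul_zero] at h
    refine h.congr fun t => by rw [pow_two]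
  -- outer bound for t ≥ 1
  have hout : ∀ t : ℝ, 1 ≤ t → (F t)^2 ≤ 2*(E*A) := by
    intro t ht
    have hFTC : ∫ s in Ioi t, 2 * F s * F' s = 0 - (F t)^2 :=
      integral_Ioi_of_hasDerivAt_of_tendsto' (fun x _ => hsq_deriv x)
        iFF'.integrableOn hF2top
    have h1 : (F t)^2 = -∫ s in Ioi t, 2 * F s * F' s := by rw [hFTC]; ring
    have h2 : (F t)^2 ≤ ∫ s in Ioi t, |2 * F s * F' s| := by
      rw [h1]
      refine (neg_le_abs _).trans ?_
      simpa only [Real.norm_eq_abs] using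
        norm_integral_le_integral_norm (μ := volume.restrict (Ioi t)) (fun s => 2 * F s * F' s)
    have h3 : (∫ s in Ioi t, |2 * F s * F' s|) ≤ ∫ s in Ioi t, ((F s)^2 + (F' s)^2) :=
      setIntegral_mono_on iFF'.abs.integrableOn (iF2.add iF'2).integrableOn
        measurableSet_Ioi (fun s _ => abs_two_mul_le _ _)
    have h4 : (∫ s in Ioi t, ((F s)^2 + (F' s)^2))
        = (∫ s in Ioi t, (F s)^2) + ∫ s in Ioi t, (F' s)^2 :=
      integral_add iF2.integrableOn iF'2.integrableOn
    have h5 : (∫ s in Ioi t, (F s)^2) ≤ ∫ s in Ioi (1:ℝ), (F s)^2 :=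
      setIntegral_mono_set iF2.integrableOn (ae_of_all _ fun s => sq_nonneg _)
        (Ioi_subset_Ioi ht).eventuallyLE
    have h6 : (∫ s in Ioi (1:ℝ), (F s)^2) ≤ ∫ s in Ioi (1:ℝ), s^(2*n)*(F s)^2 :=
      setIntegral_mono_on iF2.integrableOn iA.integrableOn measurableSet_Ioi
        (fun s hs => by
          have h1s : (1:ℝ) ≤ s^(2*n) := one_le_pow₀ (le_of_lt (mem_Ioi.mp hs))
          nlinarith [sq_nonneg (F s)])
    have h7 : (∫ s in Ioi (1:ℝ), s^(2*n)*(F s)^2) ≤ A :=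
      setIntegral_le_integral iA (ae_of_all _ fun s => by
        have h2n : (0:ℝ) ≤ s^(2*n) := Even.pow_nonneg ⟨n, by ring⟩ s
        positivity)
    have h8 : (∫ s in Ioi t, (F' s)^2) ≤ B :=
      setIntegral_le_integral iF'2 (ae_of_all _ fun s => sq_nonneg _)
    have hAE : A ≤ E * A := le_mul_of_one_le_left hA_nonneg hE
    linarith
  -- outer bound for t ≤ -1
  have hF2bot : Tendsto (fun t => (F t)^2) atBot (nhds 0) := by
    have h := hbotF.mul hbotF
    rw [mul_zero] at h
    refine h.congr fun t => by rw [pow_two]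
  have hout' : ∀ t : ℝ, t ≤ -1 → (F t)^2 ≤ 2*(E*A) := by
    intro t ht
    have hFTC : ∫ s in Iic t, 2 * F s * F' s = (F t)^2 - 0 :=
      integral_Iic_of_hasDerivAt_of_tendsto' (fun x _ => hsq_deriv x)
        iFF'.integrableOn hF2bot
    have h1 : (F t)^2 = ∫ s in Iic t, 2 * F s * F' s := by rw [hFTC]; ring
    have h2 : (F t)^2 ≤ ∫ s in Iic t, |2 * F s * F' s| := by
      rw [h1]
      refine (le_abs_self _).trans ?_
      simpa only [Real.norm_eq_abs] using
        norm_integral_le_integral_norm (μ := volume.restrict (Iic t)) (fun s => 2 * F s * F' s)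
    have h3 : (∫ s in Iic t, |2 * F s * F' s|) ≤ ∫ s in Iic t, ((F s)^2 + (F' s)^2) :=
      setIntegral_mono_on iFF'.abs.integrableOn (iF2.add iF'2).integrableOn
        measurableSet_Iic (fun s _ => abs_two_mul_le _ _)
    have h4 : (∫ s in Iic t, ((F s)^2 + (F' s)^2))
        = (∫ s in Iic t, (F s)^2) + ∫ s in Iic t, (F' s)^2 :=
      integral_add iF2.integrableOn iF'2.integrableOn
    have h5 : (∫ s in Iic t, (F s)^2) ≤ ∫ s in Iic (-1:ℝ), (F s)^2 :=
      setIntegral_mono_set iF2.integrableOn (ae_of_all _ fun s => sq_nonneg _)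
        (Iic_subset_Iic.mpr ht).eventuallyLE
    have h6 : (∫ s in Iic (-1:ℝ), (F s)^2) ≤ ∫ s in Iic (-1:ℝ), s^(2*n)*(F s)^2 :=
      setIntegral_mono_on iF2.integrableOn iA.integrableOn measurableSet_Iic
        (fun s hs => by
          have hs' : s ≤ -1 := mem_Iic.mp hs
          have h1s : (1:ℝ) ≤ s^(2*n) := by
            rw [pow_mul]
            exact one_le_pow₀ (by nlinarith)
          nlinarith [sq_nonneg (F s)])
    have h7 : (∫ s in Iic (-1:ℝ), s^(2*n)*(F s)^2) ≤ A :=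
      setIntegral_le_integral iA (ae_of_all _ fun s => by
        have h2n : (0:ℝ) ≤ s^(2*n) := Even.pow_nonneg ⟨n, by ring⟩ s
        positivity)
    have h8 : (∫ s in Iic t, (F' s)^2) ≤ B :=
      setIntegral_le_integral iF'2 (ae_of_all _ fun s => sq_nonneg _)
    have hAE : A ≤ E * A := le_mul_of_one_le_left hA_nonneg hE
    linarith
  -- middle bound
  set J : ℝ := ∫ s in Icc (-1:ℝ) 1, (F s)^2 with hJ_def
  have hmid : ∀ t : ℝ, t ∈ Icc (-1:ℝ) 1 → (F t)^2 ≤ 2*(E*A) + (J/4 + 4*B) := by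
    intro t ht
    obtain ⟨ht1, ht2⟩ := ht
    have h1 : (F 1)^2 ≤ 2*(E*A) := hout 1 le_rfl
    have hFTC2 : ∫ s in t..1, 2*F s*F' s = (F 1)^2 - (F t)^2 :=
      intervalIntegral.integral_eq_sub_of_hasDerivAt (fun x _ => hsq_deriv x)
        iFF'.intervalIntegrable
    have h3 : (F t)^2 ≤ (F 1)^2 + ∫ s in t..1, |2*F s*F' s| := by
      have habs := intervalIntegral.abs_integral_le_integral_abs
        (f := fun s => 2*F s*F' s) (μ := volume) ht2
      have hneg := neg_le_abs (∫ s in t..1, 2*F s*F' s)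
      have h2 : (F t)^2 = (F 1)^2 - ∫ s in t..1, 2*F s*F' s := by rw [hFTC2]; ring
      linarith
    have h4 : (∫ s in t..1, |2*F s*F' s|) ≤ ∫ s in t..1, ((F s)^2/4 + 4*(F' s)^2) :=
      intervalIntegral.integral_mono_on ht2 iFF'.abs.intervalIntegrable
        ((iF2.div_const 4).add (iF'2.const_mul 4)).intervalIntegrable
        (fun x _ => abs_two_mul_le' _ _)
    have h5 : (∫ s in t..1, ((F s)^2/4 + 4*(F' s)^2))
        = ∫ s in Ioc t 1, ((F s)^2/4 + 4*(F' s)^2) := intervalIntegral.integral_of_le ht2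
    have h6 : (∫ s in Ioc t 1, ((F s)^2/4 + 4*(F' s)^2))
        = (∫ s in Ioc t 1, (F s)^2/4) + ∫ s in Ioc t 1, 4*(F' s)^2 :=
      integral_add (iF2.div_const 4).integrableOn (iF'2.const_mul 4).integrableOn
    have h7 : (∫ s in Ioc t 1, (F s)^2/4) ≤ ∫ s in Icc (-1:ℝ) 1, (F s)^2/4 :=
      setIntegral_mono_set (iF2.div_const 4).integrableOn
        (ae_of_all _ fun s => by positivity)
        ((Ioc_subset_Icc_self.trans (Icc_subset_Icc ht1 le_rfl)).eventuallyLE)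
    have h8 : (∫ s in Icc (-1:ℝ) 1, (F s)^2/4) = J/4 := by
      rw [hJ_def, ← integral_div]
    have h9 : (∫ s in Ioc t 1, 4*(F' s)^2) ≤ ∫ s : ℝ, 4*(F' s)^2 :=
      setIntegral_le_integral (iF'2.const_mul 4) (ae_of_all _ fun s => by positivity)
    have h10 : (∫ s : ℝ, 4*(F' s)^2) = 4*B := by rw [hB_def, ← integral_const_mul]
    linarith
  have hJ_le : J ≤ 24*(E*A) := by
    have hconst : IntegrableOn (fun _ : ℝ => 2*(E*A) + (J/4 + 4*B)) (Icc (-1:ℝ) 1) := by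
      exact integrableOn_const (by rw [Real.volume_Icc]; exact ENNReal.ofReal_ne_top)
        (by exact enorm_ne_top)
    have h2 : J ≤ ∫ _ in Icc (-1:ℝ) 1, (2*(E*A) + (J/4 + 4*B)) := by
      rw [hJ_def]
      exact setIntegral_mono_on iF2.integrableOn hconst measurableSet_Icc hmid
    rw [setIntegral_const, measureReal_def, Real.volume_Icc] at h2
    have hvol : (ENNReal.ofReal ((1:ℝ) - (-1))).toReal = 2 := by
      rw [ENNReal.toReal_ofReal (by norm_num)]; norm_num
    rw [hvol, smul_eq_mul] at h2
    have hAE : A ≤ E * A := le_mul_of_one_le_left hA_nonneg hE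
    linarith
  intro t
  have hAE : A ≤ E * A := le_mul_of_one_le_left hA_nonneg hE
  rcases le_or_gt 1 t with h|h
  · linarith [hout t h]
  rcases le_or_gt t (-1) with h'|h'
  · linarith [hout' t h']
  · have hm := hmid t ⟨h'.le, h.le⟩
    linarith



lemma hasDerivAt_epPoly (n : ℕ) (R : Polynomial ℝ) (t : ℝ) :
    HasDerivAt (fun t : ℝ => ep n t * R.eval t) (ep n t * (Dop n R).eval t) t := by
  have hh : HasDerivAt (fun t : ℝ => -(t^(2*n+2)) / (2*(n:ℝ)+2)) (-(t^(2*n+1))) t := by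
    have h := ((hasDerivAt_pow (2*n+2) t).neg).div_const (2*(n:ℝ)+2)
    have e : 2*n+2-1 = 2*n+1 := by omega
    rw [e] at h
    refine h.congr_deriv ?_
    have hne : (2*(n:ℝ)+2) ≠ 0 := by positivity
    push_cast
    field_simp
  have hexp : HasDerivAt (ep n) (ep n t * (-(t^(2*n+1)))) t := hh.exp
  have h := hexp.mul (R.hasDerivAt t)
  refine h.congr_deriv ?_
  rw [Dop_eval]
  ring

lemma core (n : ℕ) (Q : Polynomial ℝ) (E : ℝ) (hE : 1 ≤ E)
    (heig : ∀ t : ℝ, -((Dop n (Dop n Q)).eval t) + t^(4*n+2) * Q.eval t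
        = E * t^(2*n) * Q.eval t) (t : ℝ) :
    |ep n t * Q.eval t| ≤ (4 * Real.sqrt E) *
      Real.sqrt (∫ s : ℝ, s^(2*n) * (ep n s * Q.eval s)^2) := by
  have iA : Integrable (fun s : ℝ => s^(2*n) * (ep n s * Q.eval s)^2) := by
    refine (integrable_ep2_poly n (Polynomial.X^(2*n) * Q^2)).congr ?_
    filter_upwards with s
    simp only [Polynomial.eval_mul, Polynomial.eval_pow, Polynomial.eval_X]
    ring
  have iT : Integrable (fun s : ℝ => s^(4*n+2) * (ep n s * Q.eval s)^2) := by
    refine (integrable_ep2_poly n (Polynomial.X^(4*n+2) * Q^2)).congr ?_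
    filter_upwards with s
    simp only [Polynomial.eval_mul, Polynomial.eval_pow, Polynomial.eval_X]
    ring
  have iF2 : Integrable (fun s : ℝ => (ep n s * Q.eval s)^2) := by
    refine (integrable_ep2_poly n (Q^2)).congr ?_
    filter_upwards with s
    simp only [Polynomial.eval_pow]
    ring
  have iF'2 : Integrable (fun s : ℝ => (ep n s * (Dop n Q).eval s)^2) := by
    refine (integrable_ep2_poly n ((Dop n Q)^2)).congr ?_
    filter_upwards with s
    simp only [Polynomial.eval_pow]
    ring
  have iFF'' : Integrable
      (fun s : ℝ => (ep n s * Q.eval s) * (ep n s * (Dop n (Dop n Q)).eval s)) := by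
    refine (integrable_ep2_poly n (Q * (Dop n (Dop n Q)))).congr ?_
    filter_upwards with s
    simp only [Polynomial.eval_mul]
    ring
  have iFF' : Integrable
      (fun s : ℝ => 2 * (ep n s * Q.eval s) * (ep n s * (Dop n Q).eval s)) := by
    refine (integrable_ep2_poly n (Polynomial.C 2 * (Q * Dop n Q))).congr ?_
    filter_upwards with s
    simp only [Polynomial.eval_mul, Polynomial.eval_C]
    ring
  have htopFF' : Tendsto
      (fun s : ℝ => (ep n s * Q.eval s) * (ep n s * (Dop n Q).eval s)) atTop (nhds 0) := by
    have h := (tendsto_ep_poly_atTop n Q).mul (tendsto_ep_poly_atTop n (Dop n Q))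
    rwa [mul_zero] at h
  have hbotFF' : Tendsto
      (fun s : ℝ => (ep n s * Q.eval s) * (ep n s * (Dop n Q).eval s)) atBot (nhds 0) := by
    have h := (tendsto_ep_poly_atBot n Q).mul (tendsto_ep_poly_atBot n (Dop n Q))
    rwa [mul_zero] at h
  have heig' : ∀ s : ℝ, (ep n s * Q.eval s) * (ep n s * (Dop n (Dop n Q)).eval s)
      = s^(4*n+2) * (ep n s * Q.eval s)^2 - E * s^(2*n) * (ep n s * Q.eval s)^2 := by
    intro s
    linear_combination (-(ep n s)^2 * Q.eval s) * (heig s)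
  have key := sobolev n E (fun s => ep n s * Q.eval s)
    (fun s => ep n s * (Dop n Q).eval s) (fun s => ep n s * (Dop n (Dop n Q)).eval s)
    hE (hasDerivAt_epPoly n Q) (hasDerivAt_epPoly n (Dop n Q))
    iA iT iF2 iF'2 iFF'' iFF'
    (tendsto_ep_poly_atTop n Q) (tendsto_ep_poly_atBot n Q)
    htopFF' hbotFF' heig' t
  have hA_nonneg : 0 ≤ ∫ s : ℝ, s^(2*n) * (ep n s * Q.eval s)^2 :=
    integral_nonneg fun s => by
      have h2n : (0:ℝ) ≤ s^(2*n) := Even.pow_nonneg ⟨n, by ring⟩ s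
      positivity
  have hE0 : (0:ℝ) ≤ E := by linarith
  calc |ep n t * Q.eval t| = Real.sqrt ((ep n t * Q.eval t)^2) :=
        (Real.sqrt_sq_eq_abs _).symm
  _ ≤ Real.sqrt (16 * (E * ∫ s : ℝ, s^(2*n) * (ep n s * Q.eval s)^2)) :=
        Real.sqrt_le_sqrt key
  _ = (4 * Real.sqrt E) * Real.sqrt (∫ s : ℝ, s^(2*n) * (ep n s * Q.eval s)^2) := by
      rw [Real.sqrt_mul (by norm_num : (0:ℝ) ≤ 16), Real.sqrt_mul hE0,
        show (16:ℝ) = 4^2 by norm_num, Real.sqrt_sq (by norm_num : (0:ℝ) ≤ 4)]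
      ring

/-- Uniform `L^∞` bounds for the normalized eigenfunctions:
`‖v_k‖_∞ ≤ C₀ E_k^{3/2+1/(4n+4)}` and `‖w_k‖_∞ ≤ C₀ Ẽ_k^{3/2+1/(4n+4)}`,
with `E_k = 4k(n+1)+2n+1`, `Ẽ_k = 4k(n+1)+2n+3`, `C₀` independent of `k`. -/
theorem stmt_5 (n : ℕ) (hn : 0 < n) :
    ∃ C₀ : ℝ, 0 < C₀ ∧ ∀ k : ℕ,
      (∀ t : ℝ,
        |nvk n k t| ≤
          C₀ * (4 * (k : ℝ) * ((n : ℝ) + 1) + 2 * (n : ℝ) + 1) ^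
            ((3 : ℝ) / 2 + 1 / (4 * (n : ℝ) + 4))) ∧
      (∀ t : ℝ,
        |nwk n k t| ≤
          C₀ * (4 * (k : ℝ) * ((n : ℝ) + 1) + 2 * (n : ℝ) + 3) ^
            ((3 : ℝ) / 2 + 1 / (4 * (n : ℝ) + 4))) := by
  refine ⟨4, by norm_num, fun k => ?_⟩
  have hk0 : (0:ℝ) ≤ (k:ℝ) := Nat.cast_nonneg k
  have hn0 : (0:ℝ) ≤ (n:ℝ) := Nat.cast_nonneg n
  have hmul : (0:ℝ) ≤ 4 * (k:ℝ) * ((n:ℝ)+1) := by positivity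
  constructor
  · intro t
    set Ev : ℝ := 4 * (k : ℝ) * ((n : ℝ) + 1) + 2 * (n : ℝ) + 1 with hEv_def
    have hEv : 1 ≤ Ev := by rw [hEv_def]; linarith
    have hvk : ∀ x : ℝ, vk n k x
        = ep n x * (laguerrePoly n (-(1 / (2 * (n : ℝ) + 2))) k).eval x := by
      intro x
      rw [vk, laguerrePoly_eval, ep]
    have hcore := core n (laguerrePoly n (-(1 / (2 * (n : ℝ) + 2))) k) Ev hEv
      (fun s => heig_v n k s) t
    have h1 : |nvk n k t| ≤ 4 * Real.sqrt Ev := by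
      rw [nvk]
      simp only [hvk]
      rw [abs_div, abs_of_nonneg (Real.sqrt_nonneg _)]
      rcases eq_or_lt_of_le
        (Real.sqrt_nonneg (∫ s : ℝ, s^(2*n) * (ep n s *
          (laguerrePoly n (-(1 / (2 * (n : ℝ) + 2))) k).eval s)^2)) with h0|h0
      · rw [← h0, div_zero]
        positivity
      · rw [div_le_iff₀ h0]
        exact hcore
    have h2 : Real.sqrt Ev ≤ Ev ^ ((3:ℝ)/2 + 1/(4*(n:ℝ)+4)) := by
      rw [Real.sqrt_eq_rpow]
      apply Real.rpow_le_rpow_of_exponent_le hEv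
      have hp : (0:ℝ) < 1/(4*(n:ℝ)+4) := by positivity
      linarith
    calc |nvk n k t| ≤ 4 * Real.sqrt Ev := h1
    _ ≤ 4 * Ev ^ ((3:ℝ)/2 + 1/(4*(n:ℝ)+4)) := by
        have := mul_le_mul_of_nonneg_left h2 (by norm_num : (0:ℝ) ≤ 4)
        linarith
  · intro t
    set Ev : ℝ := 4 * (k : ℝ) * ((n : ℝ) + 1) + 2 * (n : ℝ) + 3 with hEv_def
    have hEv : 1 ≤ Ev := by rw [hEv_def]; linarith
    have hwk : ∀ x : ℝ, wk n k x
        = ep n x * (Polynomial.X * laguerrePoly n (1 / (2 * (n : ℝ) + 2)) k).eval x := by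
      intro x
      rw [wk, Polynomial.eval_mul, Polynomial.eval_X, laguerrePoly_eval, ep]
      ring
    have hcore := core n (Polynomial.X * laguerrePoly n (1 / (2 * (n : ℝ) + 2)) k) Ev hEv
      (fun s => heig_w n k s) t
    have h1 : |nwk n k t| ≤ 4 * Real.sqrt Ev := by
      rw [nwk]
      simp only [hwk]
      rw [abs_div, abs_of_nonneg (Real.sqrt_nonneg _)]
      rcases eq_or_lt_of_le
        (Real.sqrt_nonneg (∫ s : ℝ, s^(2*n) * (ep n s *
          (Polynomial.X * laguerrePoly n (1 / (2 * (n : ℝ) + 2)) k).eval s)^2)) with h0|h0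
      · rw [← h0, div_zero]
        positivity
      · rw [div_le_iff₀ h0]
        exact hcore
    have h2 : Real.sqrt Ev ≤ Ev ^ ((3:ℝ)/2 + 1/(4*(n:ℝ)+4)) := by
      rw [Real.sqrt_eq_rpow]
      apply Real.rpow_le_rpow_of_exponent_le hEv
      have hp : (0:ℝ) < 1/(4*(n:ℝ)+4) := by positivity
      linarith
    calc |nwk n k t| ≤ 4 * Real.sqrt Ev := h1
    _ ≤ 4 * Ev ^ ((3:ℝ)/2 + 1/(4*(n:ℝ)+4)) := by
        have := mul_le_mul_of_nonneg_left h2 (by norm_num : (0:ℝ) ≤ 4)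
        linarith
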